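/- For every d̄ ≥ 1 there exists n₀ ∈ ℕ such that for every n ≥ n₀ and every feasible degree sequence D on V = [n] with Σ^D ≤ d̄n, setting S₃ := {u ∈ V : d(u) ≥ n^{4/5}}, the probability that the induced subgraph G^D[S₃] is a complete graph is at least 1 − n^{−1/11}. -/

import Mathlib

open Finset

noncomputable section
open scoped Classical

/-- The finset of all simple graphs on `Fin n` realising the degree sequence `D`
(vertex `v` has degree `D v`). -/
def graphsWithDegreeSeq (n : ℕ) (D : Fin n → ℕ) : Finset (SimpleGraph (Fin n)) :=
  Finset.univ.filter (fun G => ∀ v, G.degree v = D v)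

/-- Probability of `A` under the uniform distribution on simple graphs with degree
sequence `D`. -/
def uniformProb (n : ℕ) (D : Fin n → ℕ) (A : SimpleGraph (Fin n) → Prop) : ℝ :=
  (((graphsWithDegreeSeq n D).filter A).card : ℝ) / ((graphsWithDegreeSeq n D).card : ℝ)

/-!
Switching: if `ux`, `vy` are edges and `uv`, `xy` are not, replace `ux`, `vy` by `uv`, `xy`.
This preserves every degree and is undone by switching back along `ux`, `vy`. A graph of the
class with `u ≁ v` admits at least `d(u) d(v) - n - Σ^D` switchings (a pair of neighbours `x` of
`u` and `y` of `v` fails only if `x = y` or `x ~ y`), while a graph containing `uv` arises from at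
most `Σ^D` of them, one per ordered edge `xy`. Hence `P(u ≁ v) ≤ 2 d̄ n / (d(u) d(v))` as soon as
`d(u) d(v) ≥ 4 d̄ n`. At most `d̄ n / θ` vertices have degree `≥ θ`, so a union bound over their
pairs bounds the failure probability by `2 d̄³ n³ / θ⁴`, which is `2 d̄³ n^(-1/5) ≤ n^(-1/11)` for
`θ = n^(4/5)` and `n` large.
-/

namespace SimpleGraph

variable {V : Type*} {G : SimpleGraph V} {u v x y : V}

def switch (G : SimpleGraph V) (u v x y : V) : SimpleGraph V :=
  fromEdgeSet ((G.edgeSet \ {s(u, x), s(v, y)}) ∪ {s(u, v), s(x, y)})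

structure IsSwitchable (G : SimpleGraph V) (u v x y : V) : Prop where
  ne_uv : u ≠ v
  ne_xy : x ≠ y
  adj_ux : G.Adj u x
  adj_vy : G.Adj v y
  not_adj_uv : ¬ G.Adj u v
  not_adj_xy : ¬ G.Adj x y

theorem switch_swap_pairs (G : SimpleGraph V) (u v x y : V) :
    G.switch x y u v = G.switch u v x y := by
  rw [switch, switch, Sym2.eq_swap (a := x), Sym2.eq_swap (a := y), Set.pair_comm s(x, y)]

theorem switch_swap (G : SimpleGraph V) (u v x y : V) :
    G.switch v u y x = G.switch u v x y := by
  rw [switch, switch, Set.pair_comm s(v, y), Sym2.eq_swap (a := v) (b := u),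
    Sym2.eq_swap (a := y) (b := x)]

namespace IsSwitchable

theorem swap_pairs (h : G.IsSwitchable u v x y) : G.IsSwitchable x y u v :=
  ⟨h.ne_xy, h.ne_uv, h.adj_ux.symm, h.adj_vy.symm, h.not_adj_xy, h.not_adj_uv⟩

theorem swap (h : G.IsSwitchable u v x y) : G.IsSwitchable v u y x :=
  ⟨h.ne_uv.symm, h.ne_xy.symm, h.adj_vy, h.adj_ux, fun e => h.not_adj_uv e.symm,
    fun e => h.not_adj_xy e.symm⟩

theorem ne_uy (h : G.IsSwitchable u v x y) : u ≠ y := by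
  rintro rfl; exact h.not_adj_uv h.adj_vy.symm

theorem ne_xv (h : G.IsSwitchable u v x y) : x ≠ v := by
  rintro rfl; exact h.not_adj_uv h.adj_ux

theorem edgeSet_switch (h : G.IsSwitchable u v x y) :
    (G.switch u v x y).edgeSet = (G.edgeSet \ {s(u, x), s(v, y)}) ∪ {s(u, v), s(x, y)} := by
  rw [switch, edgeSet_fromEdgeSet, sdiff_eq_left, Set.disjoint_left]
  rintro e (⟨he, -⟩ | rfl | rfl)
  · exact G.not_isDiag_of_mem_edgeSet he
  · simpa using h.ne_uv
  · simpa using h.ne_xy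

theorem switch (h : G.IsSwitchable u v x y) : (G.switch u v x y).IsSwitchable u x v y := by
  refine ⟨h.adj_ux.ne, h.adj_vy.ne, ?_, ?_, ?_, ?_⟩ <;>
    simp [← mem_edgeSet, h.edgeSet_switch, h.ne_uv, h.adj_ux.ne, h.adj_vy.ne, h.ne_uy, h.ne_xv,
      h.ne_uv.symm, h.ne_uy.symm, h.ne_xv.symm]

theorem neighborFinset_switch_left [Fintype V] [DecidableEq V] (h : G.IsSwitchable u v x y) :
    (G.switch u v x y).neighborFinset u = insert v ((G.neighborFinset u).erase x) := by
  ext b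
  simp [← mem_edgeSet, h.edgeSet_switch, h.ne_uv, h.ne_uy, h.adj_ux.ne, or_comm, and_comm]

theorem switch_adj_of_ne (h : G.IsSwitchable u v x y) {w b : V} (hu : w ≠ u) (hv : w ≠ v)
    (hx : w ≠ x) (hy : w ≠ y) : (G.switch u v x y).Adj w b ↔ G.Adj w b := by
  simp [← mem_edgeSet, h.edgeSet_switch, hu, hv, hx, hy]

theorem degree_switch_left [Fintype V] (h : G.IsSwitchable u v x y) :
    (G.switch u v x y).degree u = G.degree u := by
  have hv : v ∉ (G.neighborFinset u).erase x := fun hv =>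
    h.not_adj_uv ((mem_neighborFinset _ _ _).1 (mem_of_mem_erase hv))
  rw [← card_neighborFinset_eq_degree, h.neighborFinset_switch_left, card_insert_of_notMem hv,
    card_erase_add_one (by simpa using h.adj_ux), card_neighborFinset_eq_degree]

theorem degree_switch [Fintype V] (h : G.IsSwitchable u v x y) (w : V) :
    (G.switch u v x y).degree w = G.degree w := by
  by_cases hu : w = u
  · subst hu; exact h.degree_switch_left
  by_cases hv : w = v
  · subst hv; rw [← switch_swap]; exact h.swap.degree_switch_left
  by_cases hx : w = x
  · subst hx; rw [← switch_swap_pairs]; exact h.swap_pairs.degree_switch_left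
  by_cases hy : w = y
  · subst hy
    rw [← switch_swap_pairs, ← switch_swap]
    exact h.swap_pairs.swap.degree_switch_left
  simp only [← card_neighborFinset_eq_degree]
  congr 1
  ext b
  simp [h.switch_adj_of_ne hu hv hx hy]

theorem switch_switch (h : G.IsSwitchable u v x y) : (G.switch u v x y).switch u x v y = G := by
  rw [← edgeSet_inj, h.switch.edgeSet_switch, h.edgeSet_switch]
  ext e
  simp only [Set.mem_union, Set.mem_sdiff, Set.mem_insert_iff, Set.mem_singleton_iff]
  constructor
  · rintro (⟨⟨he, -⟩ | hB, hnB⟩ | rfl | rfl)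
    exacts [he, absurd hB hnB, h.adj_ux, h.adj_vy]
  · intro he
    by_cases hA : e = s(u, x) ∨ e = s(v, y)
    · exact Or.inr hA
    · refine Or.inl ⟨Or.inl ⟨he, hA⟩, ?_⟩
      rintro (rfl | rfl)
      exacts [h.not_adj_uv he, h.not_adj_xy he]

end IsSwitchable

theorem card_filter_adj_eq_sum_degrees [Fintype V] (G : SimpleGraph V) :
    #{p : V × V | G.Adj p.1 p.2} = ∑ w, G.degree w := by
  simp only [← card_neighborFinset_eq_degree, neighborFinset_eq_filter, card_filter,
    Fintype.sum_prod_type]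

theorem degree_mul_degree_le_card_switchable [Fintype V] (G : SimpleGraph V) (huv : u ≠ v)
    (h : ¬ G.Adj u v) :
    G.degree u * G.degree v ≤
      #{p : V × V | G.IsSwitchable u v p.1 p.2} + Fintype.card V + ∑ w, G.degree w := by
  have hsub : G.neighborFinset u ×ˢ G.neighborFinset v ⊆
      ({p : V × V | G.IsSwitchable u v p.1 p.2} : Finset _) ∪ univ.diag ∪
        ({p : V × V | G.Adj p.1 p.2} : Finset _) := by
    rintro ⟨x, y⟩ hxy
    simp only [mem_product, mem_neighborFinset] at hxy
    by_cases hxy' : x = y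
    · simp [hxy']
    by_cases hadj : G.Adj x y
    · simp [hadj]
    simp [IsSwitchable.mk huv hxy' hxy.1 hxy.2 h hadj]
  calc G.degree u * G.degree v = #(G.neighborFinset u ×ˢ G.neighborFinset v) := by
        rw [card_product, card_neighborFinset_eq_degree, card_neighborFinset_eq_degree]
    _ ≤ _ := card_le_card hsub
    _ ≤ _ := (card_union_le _ _).trans (Nat.add_le_add_right (card_union_le _ _) _)
    _ = _ := by rw [diag_card, card_univ, card_filter_adj_eq_sum_degrees]

end SimpleGraph

open SimpleGraph

section DegreeSequence

variable {n : ℕ} {D : Fin n → ℕ}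

@[simp]
theorem mem_graphsWithDegreeSeq {G : SimpleGraph (Fin n)} :
    G ∈ graphsWithDegreeSeq n D ↔ ∀ v, G.degree v = D v := by
  simp [graphsWithDegreeSeq]

theorem sum_card_switchable_le (u v : Fin n) :
    ∑ G ∈ (graphsWithDegreeSeq n D).filter (fun G => ¬ G.Adj u v),
        #{p : Fin n × Fin n | G.IsSwitchable u v p.1 p.2} ≤
      #((graphsWithDegreeSeq n D).filter (fun G => G.Adj u v)) * ∑ i, D i := by
  set A := (graphsWithDegreeSeq n D).filter (fun G => ¬ G.Adj u v)
  set B := (graphsWithDegreeSeq n D).filter (fun G => G.Adj u v)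
  calc _ = ∑ p : Fin n × Fin n, #{G ∈ A | G.IsSwitchable u v p.1 p.2} :=
        sum_card_bipartiteAbove_eq_sum_card_bipartiteBelow _
    _ ≤ ∑ p : Fin n × Fin n, #{G ∈ B | G.Adj p.1 p.2} := by
        refine sum_le_sum fun p _ => card_le_card_of_injOn (·.switch u v p.1 p.2) ?_ ?_
        · intro G hG
          simp only [A, B, mem_coe, mem_filter, mem_graphsWithDegreeSeq] at hG ⊢
          exact ⟨⟨fun w => (hG.2.degree_switch w).trans (hG.1.1 w), hG.2.switch.adj_ux⟩,
            hG.2.switch.adj_vy⟩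
        · intro G₁ hG₁ G₂ hG₂ he
          simp only [mem_coe, mem_filter] at hG₁ hG₂
          rw [← hG₁.2.switch_switch, ← hG₂.2.switch_switch]
          exact congrArg (·.switch u p.1 v p.2) he
    _ = ∑ G ∈ B, #{p : Fin n × Fin n | G.Adj p.1 p.2} :=
        (sum_card_bipartiteAbove_eq_sum_card_bipartiteBelow _).symm
    _ = _ := by
        rw [← smul_eq_mul, ← sum_const]
        refine sum_congr rfl fun G hG => ?_
        rw [card_filter_adj_eq_sum_degrees]
        exact sum_congr rfl fun w _ => mem_graphsWithDegreeSeq.1 (mem_filter.1 hG).1 w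

theorem card_not_adj_mul_le {u v : Fin n} (huv : u ≠ v) :
    #((graphsWithDegreeSeq n D).filter (fun G => ¬ G.Adj u v)) * (D u * D v) ≤
      #((graphsWithDegreeSeq n D).filter (fun G => G.Adj u v)) * ∑ i, D i +
        #((graphsWithDegreeSeq n D).filter (fun G => ¬ G.Adj u v)) * (n + ∑ i, D i) := by
  set A := (graphsWithDegreeSeq n D).filter (fun G => ¬ G.Adj u v)
  calc #A * (D u * D v)
      ≤ ∑ G ∈ A, (#{p : Fin n × Fin n | G.IsSwitchable u v p.1 p.2} + (n + ∑ i, D i)) := by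
        rw [← smul_eq_mul, ← sum_const]
        refine sum_le_sum fun G hG => ?_
        obtain ⟨hdeg, hG⟩ := mem_filter.1 hG
        rw [mem_graphsWithDegreeSeq] at hdeg
        have := G.degree_mul_degree_le_card_switchable huv hG
        simp only [hdeg, Fintype.card_fin] at this
        omega
    _ = ∑ G ∈ A, #{p : Fin n × Fin n | G.IsSwitchable u v p.1 p.2} +
          #A * (n + ∑ i, D i) := by
        rw [sum_add_distrib, sum_const, smul_eq_mul]
    _ ≤ _ := Nat.add_le_add_right (sum_card_switchable_le u v) _

theorem uniformProb_eq_card_div (A : SimpleGraph (Fin n) → Prop) [DecidablePred A] :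
    uniformProb n D A =
      (#((graphsWithDegreeSeq n D).filter A) : ℝ) / #(graphsWithDegreeSeq n D) := by
  rw [uniformProb]
  congr

theorem uniformProb_not (hne : (graphsWithDegreeSeq n D).Nonempty)
    (A : SimpleGraph (Fin n) → Prop) :
    uniformProb n D (fun G => ¬ A G) = 1 - uniformProb n D A := by
  have hpos : (0 : ℝ) < #(graphsWithDegreeSeq n D) := by exact_mod_cast hne.card_pos
  rw [uniformProb_eq_card_div, uniformProb_eq_card_div, eq_sub_iff_add_eq, ← add_div,
    div_eq_one_iff_eq hpos.ne', add_comm]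
  exact_mod_cast card_filter_add_card_filter_not A

theorem uniformProb_le_sum {ι : Type*} (s : Finset ι) {A : SimpleGraph (Fin n) → Prop}
    {B : ι → SimpleGraph (Fin n) → Prop} (h : ∀ G, A G → ∃ i ∈ s, B i G) :
    uniformProb n D A ≤ ∑ i ∈ s, uniformProb n D (B i) := by
  simp only [uniformProb, ← sum_div]
  gcongr
  have hsub : (graphsWithDegreeSeq n D).filter A ⊆
      s.biUnion fun i => (graphsWithDegreeSeq n D).filter (B i) := by
    intro G hG
    obtain ⟨hG, hA⟩ := mem_filter.1 hG
    obtain ⟨i, hi, hB⟩ := h G hA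
    exact mem_biUnion.2 ⟨i, hi, mem_filter.2 ⟨hG, hB⟩⟩
  exact_mod_cast (card_le_card hsub).trans card_biUnion_le

theorem uniformProb_not_adj_le (hne : (graphsWithDegreeSeq n D).Nonempty) {u v : Fin n}
    (huv : u ≠ v) {dbar θ : ℝ} (hdbar : 1 ≤ dbar) (hsum : ∑ i, (D i : ℝ) ≤ dbar * n)
    (hθ : 0 < θ) (hθn : 4 * dbar * n ≤ θ ^ 2) (hu : θ ≤ D u) (hv : θ ≤ D v) :
    uniformProb n D (fun G => ¬ G.Adj u v) ≤ 2 * dbar * n / θ ^ 2 := by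
  have hcount := (Nat.cast_le (α := ℝ)).2 (card_not_adj_mul_le (D := D) huv)
  have hbg := (Nat.cast_le (α := ℝ)).2
    (card_le_card (filter_subset (fun G => G.Adj u v) (graphsWithDegreeSeq n D)))
  have hg : (0 : ℝ) < #(graphsWithDegreeSeq n D) := by exact_mod_cast hne.card_pos
  push_cast at hcount
  have hθ2 : θ ^ 2 ≤ D u * D v := by rw [sq]; exact mul_le_mul hu hv hθ.le (hθ.le.trans hu)
  have hS : 0 ≤ ∑ i, (D i : ℝ) := sum_nonneg fun i _ => Nat.cast_nonneg _
  have hn : (n : ℝ) ≤ dbar * n := le_mul_of_one_le_left (Nat.cast_nonneg n) hdbar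
  rw [uniformProb_eq_card_div, div_le_div_iff₀ hg (by positivity)]
  nlinarith [mul_le_mul_of_nonneg_left hθ2 (Nat.cast_nonneg (α := ℝ)
      #((graphsWithDegreeSeq n D).filter (fun G => ¬ G.Adj u v))),
    mul_le_mul hbg hsum hS hg.le]

theorem uniformProb_not_clique_le (hne : (graphsWithDegreeSeq n D).Nonempty)
    {dbar θ : ℝ} (hdbar : 1 ≤ dbar) (hsum : ∑ i, (D i : ℝ) ≤ dbar * n) (hθ : 0 < θ)
    (hθn : 4 * dbar * n ≤ θ ^ 2) :
    uniformProb n D (fun G => ¬ ∀ u v : Fin n, θ ≤ D u → θ ≤ D v → u ≠ v → G.Adj u v) ≤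
      2 * dbar ^ 3 * n ^ 3 / θ ^ 4 := by
  set H : Finset (Fin n) := {u | θ ≤ D u}
  have hH : (#H : ℝ) * θ ≤ dbar * n :=
    calc (#H : ℝ) * θ = ∑ u ∈ H, θ := by rw [sum_const, nsmul_eq_mul]
      _ ≤ ∑ u ∈ H, (D u : ℝ) := sum_le_sum fun u hu => (mem_filter.1 hu).2
      _ ≤ ∑ u, (D u : ℝ) :=
        sum_le_sum_of_subset_of_nonneg (subset_univ _) fun _ _ _ => Nat.cast_nonneg _
      _ ≤ dbar * n := hsum
  have hoff : (#H.offDiag : ℝ) ≤ #H ^ 2 := by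
    rw [offDiag_card, sq]; exact_mod_cast Nat.sub_le _ _
  calc _ ≤ ∑ p ∈ H.offDiag, uniformProb n D (fun G => ¬ G.Adj p.1 p.2) := by
        refine uniformProb_le_sum _ fun G hG => ?_
        push Not at hG
        obtain ⟨u, v, hu, hv, huv, hadj⟩ := hG
        exact ⟨(u, v), mem_offDiag.2 ⟨by simpa [H], by simpa [H], huv⟩, hadj⟩
    _ ≤ ∑ p ∈ H.offDiag, 2 * dbar * n / θ ^ 2 := by
        refine sum_le_sum fun p hp => ?_
        obtain ⟨hu, hv, huv⟩ := mem_offDiag.1 hp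
        exact uniformProb_not_adj_le hne huv hdbar hsum hθ hθn (mem_filter.1 hu).2
          (mem_filter.1 hv).2
    _ ≤ #H ^ 2 * (2 * dbar * n / θ ^ 2) := by
        rw [sum_const, nsmul_eq_mul]
        gcongr
    _ ≤ (dbar * n / θ) ^ 2 * (2 * dbar * n / θ ^ 2) := by
        have hdn : (0 : ℝ) ≤ dbar * n := by positivity
        gcongr
        rwa [le_div_iff₀ hθ]
    _ = 2 * dbar ^ 3 * n ^ 3 / θ ^ 4 := by field_simp

end DegreeSequence

theorem eventually_exponent_bounds {dbar : ℝ} (hdbar : 1 ≤ dbar) :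
    ∀ᶠ n : ℕ in Filter.atTop, 0 < (n : ℝ) ^ ((4 : ℝ) / 5) ∧
      4 * dbar * n ≤ ((n : ℝ) ^ ((4 : ℝ) / 5)) ^ 2 ∧
      2 * dbar ^ 3 * n ^ 3 / ((n : ℝ) ^ ((4 : ℝ) / 5)) ^ 4 ≤
        (n : ℝ) ^ (-(1 : ℝ) / 11) := by
  filter_upwards [((tendsto_rpow_atTop (by norm_num : (0 : ℝ) < 1 / 55)).comp
    tendsto_natCast_atTop_atTop).eventually_ge_atTop (4 * dbar ^ 3)] with n ht
  -- With `t = n ^ (1/55)` every exponent involved becomes a natural power of `t`.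
  set t := (n : ℝ) ^ ((1 : ℝ) / 55)
  replace ht : 4 * dbar ^ 3 ≤ t := ht
  have hdbar3 : dbar ≤ dbar ^ 3 := le_self_pow₀ hdbar (by norm_num)
  have ht1 : 1 ≤ t := by linarith
  have hpow (q : ℝ) (k : ℕ) (hq : q = k / 55) : (n : ℝ) ^ q = t ^ k := by
    rw [← Real.rpow_natCast, ← Real.rpow_mul (Nat.cast_nonneg _), hq]
    ring_nf
  have hn : (n : ℝ) = t ^ 55 := by rw [← hpow 1 55 (by norm_num), Real.rpow_one]
  rw [hpow ((4 : ℝ) / 5) 44 (by norm_num), neg_div, Real.rpow_neg (Nat.cast_nonneg _),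
    hpow _ 5 (by norm_num), hn]
  refine ⟨by positivity, ?_, ?_⟩
  · rw [← pow_mul, show 44 * 2 = 33 + 55 by rfl, pow_add]
    gcongr
    nlinarith [le_self_pow₀ ht1 (show 33 ≠ 0 by norm_num)]
  · calc 2 * dbar ^ 3 * (t ^ 55) ^ 3 / (t ^ 44) ^ 4 = 2 * dbar ^ 3 / t ^ 6 * (t ^ 5)⁻¹ := by
          field_simp
      _ ≤ 1 * (t ^ 5)⁻¹ := by
          gcongr
          rw [div_le_one (by positivity)]
          nlinarith [le_self_pow₀ ht1 (show 6 ≠ 0 by norm_num)]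
      _ = (t ^ 5)⁻¹ := one_mul _

/-- **Lemma (the vertices of degree at least `n^{4/5}` typically form a clique).** -/
theorem high_degree_vertices_clique :
    ∀ dbar : ℝ, 1 ≤ dbar →
    ∃ n₀ : ℕ, ∀ n : ℕ, n₀ ≤ n →
    ∀ D : Fin n → ℕ, (∀ w, 1 ≤ D w) →
    (graphsWithDegreeSeq n D).Nonempty →
    (∑ i, (D i : ℝ)) ≤ dbar * n →
    1 - (n : ℝ) ^ (-(1 : ℝ) / 11) ≤
      uniformProb n D (fun G => ∀ u v : Fin n,
        (n : ℝ) ^ ((4 : ℝ) / 5) ≤ (D u : ℝ) → (n : ℝ) ^ ((4 : ℝ) / 5) ≤ (D v : ℝ) →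
        u ≠ v → G.Adj u v) := by
  intro dbar hdbar
  obtain ⟨n₀, hn₀⟩ := Filter.eventually_atTop.1 (eventually_exponent_bounds hdbar)
  refine ⟨n₀, fun n hn D _ hne hsum => ?_⟩
  obtain ⟨hθ, hθn, hε⟩ := hn₀ n hn
  have hbad := uniformProb_not_clique_le hne hdbar hsum hθ hθn
  rw [uniformProb_not hne] at hbad
  linarith
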